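/- arXiv:1207.4556 — 2 statements merged into one kernel-verified Lean document; each statement's English description precedes it below -/
import Mathlib

section
/- The expected number of key comparisons of Quicksort satisfies E[K_n] = 2(n+1)H_n − 4n, where H_n = ∑_{k=1}^n 1/k: that is, the sequence μ(n) defined by μ(0) = 0 and μ(n) = n − 1 + (2/n)·∑_{j=0}^{n−1} μ(j) for n ≥ 1 satisfies μ(n) = 2(n+1)H_n − 4n for all n ≥ 0. -/
private noncomputable def qf (n : ℕ) : ℝ :=
  2 * ((n : ℝ) + 1) * (∑ k ∈ Finset.range n, (1 : ℝ) / (k + 1)) - 4 * n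

private lemma qf_key : ∀ n : ℕ,
    (n : ℝ) * qf n = (n : ℝ) * ((n : ℝ) - 1) + 2 * ∑ j ∈ Finset.range n, qf j := by
  intro n
  induction n with
  | zero => simp [qf]
  | succ n ih =>
      have hne : ((n : ℝ) + 1) ≠ 0 := by positivity
      rw [Finset.sum_range_succ]
      have hqf : qf (n + 1) =
          2 * ((n : ℝ) + 2) * ((∑ k ∈ Finset.range n, (1 : ℝ) / (k + 1)) + 1 / ((n : ℝ) + 1))
            - 4 * ((n : ℝ) + 1) := by
        simp only [qf, Finset.sum_range_succ]
        push_cast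
        ring
      set h := ∑ k ∈ Finset.range n, (1 : ℝ) / (k + 1) with hh
      have hq : qf n = 2 * ((n : ℝ) + 1) * h - 4 * n := rfl
      push_cast
      rw [hqf, hq]
      rw [hq] at ih
      -- from ih : n * (2(n+1)h - 4n) = n(n-1) + 2 S
      have hS : 2 * ∑ j ∈ Finset.range n, qf j
          = (n : ℝ) * (2 * ((n : ℝ) + 1) * h - 4 * n) - (n : ℝ) * ((n : ℝ) - 1) := by
        linarith [ih]
      have hx : ((n : ℝ) + 1) * (1 / ((n : ℝ) + 1)) = 1 := by field_simp
      linear_combination (-1 : ℝ) * hS + 2 * ((n : ℝ) + 2) * hx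

/-- The expected number of key comparisons of Quicksort: if `μ 0 = 0` and
`μ n = n - 1 + (2/n) ∑_{j=0}^{n-1} μ j` for `n ≥ 1`, then
`μ n = 2 (n+1) H_n - 4 n` where `H_n = ∑_{k=1}^n 1/k`. -/
theorem quicksort_mean (μ : ℕ → ℝ)
    (h0 : μ 0 = 0)
    (hrec : ∀ n : ℕ, 1 ≤ n →
      μ n = (n : ℝ) - 1 + (2 / (n : ℝ)) * ∑ j ∈ Finset.range n, μ j) :
    ∀ n : ℕ, μ n =
      2 * ((n : ℝ) + 1) * (∑ k ∈ Finset.range n, (1 : ℝ) / (k + 1)) - 4 * n := by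
  have main : ∀ n : ℕ, μ n = qf n := by
    intro n
    induction n using Nat.strong_induction_on with
    | _ n ih =>
      match n with
      | 0 => simpa [qf] using h0
      | Nat.succ m =>
        have h1 : 1 ≤ m + 1 := Nat.le_add_left 1 m
        have hsum : ∑ j ∈ Finset.range (m + 1), μ j
            = ∑ j ∈ Finset.range (m + 1), qf j :=
          Finset.sum_congr rfl fun j hj => ih j (Finset.mem_range.mp hj)
        have hk := qf_key (m + 1)
        have hne : ((m : ℝ) + 1) ≠ 0 := by positivity
        rw [hrec (m + 1) h1, hsum]
        push_cast at hk ⊢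
        field_simp at hk ⊢
        linarith [hk]
  intro n
  exact main n
end

section
/- Let (Δ(n))_{n≥0} be a bounded sequence of nonnegative reals, let (I_n) be random variables with I_n uniform on {0,…,n−1}, and let a_n(k) ≥ 0 be coefficients with (1/n)∑_{k=0}^{n−1} a_n(k) → c for some c < 1, sup_{n,k} a_n(k) < ∞, and with the property that for every fixed n₀, (1/n)∑_{k=0}^{n₀−1} a_n(k) → 0 as n → ∞. If Δ(n) ≤ (1/n)∑_{k=0}^{n−1} a_n(k)·Δ(k) + ε_n with ε_n → 0, then Δ(n) → 0. -/
open Filter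

/-- The contraction-method convergence argument: if `Δ(n) ≥ 0` is bounded and
satisfies `Δ(n) ≤ (1/n) ∑_{k<n} a_n(k) Δ(k) + ε_n` with nonnegative,
uniformly bounded coefficients `a_n(k)` such that
`(1/n) ∑_{k<n} a_n(k) → c < 1`, `(1/n) ∑_{k<n₀} a_n(k) → 0` for every fixed
`n₀`, and `ε_n → 0`, then `Δ(n) → 0`. -/
theorem contraction_method_convergence
    (Δ : ℕ → ℝ) (a : ℕ → ℕ → ℝ) (ε : ℕ → ℝ) (c : ℝ)
    (hΔpos : ∀ n, 0 ≤ Δ n)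
    (hΔbdd : ∃ M : ℝ, ∀ n, Δ n ≤ M)
    (hapos : ∀ n k, 0 ≤ a n k)
    (habdd : ∃ A : ℝ, ∀ n k, a n k ≤ A)
    (hc : c < 1)
    (hsum : Tendsto (fun n : ℕ => (1 / (n : ℝ)) * ∑ k ∈ Finset.range n, a n k)
      atTop (nhds c))
    (hinit : ∀ n₀ : ℕ,
      Tendsto (fun n : ℕ => (1 / (n : ℝ)) * ∑ k ∈ Finset.range n₀, a n k)
        atTop (nhds 0))
    (hε : Tendsto ε atTop (nhds 0))
    (hrec : ∀ n : ℕ, 1 ≤ n →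
      Δ n ≤ (1 / (n : ℝ)) * (∑ k ∈ Finset.range n, a n k * Δ k) + ε n) :
    Tendsto Δ atTop (nhds 0) := by
  obtain ⟨M, hM⟩ := hΔbdd
  have hbdd : IsBoundedUnder (· ≤ ·) atTop Δ := isBoundedUnder_of ⟨M, hM⟩
  have hcobdd : IsBoundedUnder (· ≥ ·) atTop Δ := isBoundedUnder_of ⟨0, hΔpos⟩
  set lam := limsup Δ atTop with hlamdef
  have hlam0 : 0 ≤ lam :=
    le_limsup_of_frequently_le (Frequently.of_forall hΔpos) hbdd
  have key : ∀ δ : ℝ, 0 < δ → lam ≤ c * (lam + δ) := by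
    intro δ hδ
    have hev : ∀ᶠ k in atTop, Δ k < lam + δ :=
      eventually_lt_of_limsup_lt (by linarith) hbdd
    obtain ⟨n₀, hn₀⟩ := eventually_atTop.mp hev
    set g : ℕ → ℝ := fun n => M * ((1/(n:ℝ)) * ∑ k ∈ Finset.range n₀, a n k)
        + (lam + δ) * ((1/(n:ℝ)) * ∑ k ∈ Finset.range n, a n k) + ε n with hg
    have hgl : Tendsto g atTop (nhds (c * (lam + δ))) := by
      have h1 := (hinit n₀).const_mul M
      have h2 := hsum.const_mul (lam + δ)
      rw [show c * (lam + δ) = (M * 0 + (lam + δ) * c) + 0 by ring]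
      exact (h1.add h2).add hε
    have hle : ∀ᶠ n in atTop, Δ n ≤ g n := by
      filter_upwards [eventually_ge_atTop (max 1 n₀)] with n hn
      have hn1 : 1 ≤ n := le_trans (le_max_left _ _) hn
      have hnn0 : n₀ ≤ n := le_trans (le_max_right _ _) hn
      have hninv : (0:ℝ) ≤ 1 / (n:ℝ) := by positivity
      have hsplit : ∑ k ∈ Finset.range n, a n k * Δ k
          = ∑ k ∈ Finset.range n₀, a n k * Δ k
            + ∑ k ∈ Finset.Ico n₀ n, a n k * Δ k := by
        rw [Finset.range_eq_Ico, ← Finset.sum_Ico_consecutive _ (Nat.zero_le n₀) hnn0, ← Finset.range_eq_Ico]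
      have hb1 : ∑ k ∈ Finset.range n₀, a n k * Δ k
          ≤ ∑ k ∈ Finset.range n₀, a n k * M :=
        Finset.sum_le_sum fun k _ => mul_le_mul_of_nonneg_left (hM k) (hapos n k)
      have hb2 : ∑ k ∈ Finset.Ico n₀ n, a n k * Δ k
          ≤ ∑ k ∈ Finset.range n, a n k * (lam + δ) := by
        have step1 : ∑ k ∈ Finset.Ico n₀ n, a n k * Δ k
            ≤ ∑ k ∈ Finset.Ico n₀ n, a n k * (lam + δ) :=
          Finset.sum_le_sum fun k hk => mul_le_mul_of_nonneg_left
            (le_of_lt (hn₀ k (Finset.mem_Ico.mp hk).1)) (hapos n k)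
        refine step1.trans ?_
        refine Finset.sum_le_sum_of_subset_of_nonneg ?_ fun k _ _ =>
          mul_nonneg (hapos n k) (by linarith)
        rw [Finset.range_eq_Ico]
        exact Finset.Ico_subset_Ico (Nat.zero_le _) le_rfl
      calc Δ n ≤ (1 / (n:ℝ)) * (∑ k ∈ Finset.range n, a n k * Δ k) + ε n :=
            hrec n hn1
        _ ≤ (1 / (n:ℝ)) * (∑ k ∈ Finset.range n₀, a n k * M
              + ∑ k ∈ Finset.range n, a n k * (lam + δ)) + ε n := by
            have : ∑ k ∈ Finset.range n, a n k * Δ k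
                ≤ ∑ k ∈ Finset.range n₀, a n k * M
                  + ∑ k ∈ Finset.range n, a n k * (lam + δ) := by
              rw [hsplit]; exact add_le_add hb1 hb2
            exact add_le_add_left (mul_le_mul_of_nonneg_left this hninv) _
        _ = g n := by
            simp only [hg, ← Finset.sum_mul]
            ring
    calc lam ≤ limsup g atTop := limsup_le_limsup hle hcobdd.isCoboundedUnder_le hgl.isBoundedUnder_le
      _ = c * (lam + δ) := hgl.limsup_eq
  have hlamle : lam ≤ 0 := by
    by_contra h
    push_neg at h
    rcases le_or_gt c 0 with hc0 | hc0
    · have := key 1 one_pos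
      nlinarith
    · have hδ : 0 < (lam - c * lam) / (2 * c) := by
        apply div_pos; nlinarith; linarith
      have := key _ hδ
      have : c * (lam + (lam - c * lam) / (2 * c)) = (lam + c * lam) / 2 := by
        field_simp; ring
      nlinarith [key _ hδ]
  have hliminf : (0:ℝ) ≤ liminf Δ atTop :=
    le_liminf_of_le hbdd.isCoboundedUnder_ge (Eventually.of_forall hΔpos)
  exact tendsto_of_le_liminf_of_limsup_le hliminf hlamle hbdd hcobdd
end
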